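/- arXiv:math/9908135 — 3 statements merged into one kernel-verified Lean document; each statement's English description precedes it below -/
import Mathlib

section
/- Let M be a paracompact normal topological space, π : Y → M a locally split continuous map, and q ≥ 1 an integer. If f : Y^[q+1] → ℂ is continuous and satisfies δf = 0 as a function on Y^[q+2], then there exists a continuous function g : Y^[q] → ℂ with δg = f on Y^[q+1]. (Exactness of the fundamental complex Ω⁰(M) → Ω⁰(Y) → Ω⁰(Y^[2]) → Ω⁰(Y^[3]) → ⋯ of continuous ℂ-valued functions in all positive degrees.) -/
/-!
A section `σ` of `π` over the fibre of a tuple `y` cones it off: `(h_σ f)(y) = f(σ(π y), y)`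
satisfies `δ h_σ + h_σ δ = -1`, since the zeroth face of the cone is `y` and its other faces are
the cones on the faces of `y`. Local sections only give continuous cones over the open sets of a
cover, so we average them with a subordinate partition of unity: the weights depend only on the
base point, which all faces share, so the average is still a contracting homotopy, and it is
continuous. Then `g = -h f` solves `δg = f` whenever `δf = 0`.
-/

/-- The `p`-fold fibre product `Y^[p]` of a map `π : Y → M`: the set of `p`-tuples of
points of `Y` lying in a single fibre of `π` (a subspace of the product `Y × ⋯ × Y`). -/
def fibreProduct {Y M : Type*} (π : Y → M) (p : ℕ) : Set (Fin p → Y) :=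
  {v | ∀ i j, π (v i) = π (v j)}

/-- The simplicial coboundary `δ`: for `g` a function on `Y^[q]`,
`δg (y₁, …, y_{q+1}) = ∑ (−1)^i g(y₁, …, ŷ_i, …, y_{q+1})` (the `i`-th entry omitted,
entries indexed from `1` in the sum; here `i : Fin (q+1)` is `0`-indexed, whence the
sign `(−1)^(i+1)`). -/
noncomputable def fibreDelta {Y M : Type*} (π : Y → M) {q : ℕ}
    (g : fibreProduct π q → ℂ) : fibreProduct π (q + 1) → ℂ :=
  fun v => ∑ i : Fin (q + 1), (-1 : ℂ) ^ ((i : ℕ) + 1) *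
    g ⟨fun j => v.1 (i.succAbove j), fun j k => v.2 (i.succAbove j) (i.succAbove k)⟩

open Set

section FibreProduct

variable {Y M : Type*} (π : Y → M)

def fibreFace {p : ℕ} (i : Fin (p + 1)) (v : fibreProduct π (p + 1)) : fibreProduct π p :=
  ⟨fun j => v.1 (i.succAbove j), fun j k => v.2 (i.succAbove j) (i.succAbove k)⟩

lemma fibreDelta_apply {q : ℕ} (g : fibreProduct π q → ℂ) (v : fibreProduct π (q + 1)) :
    fibreDelta π g v = ∑ i : Fin (q + 1), (-1 : ℂ) ^ ((i : ℕ) + 1) * g (fibreFace π i v) :=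
  rfl

lemma fibreDelta_neg {q : ℕ} (g : fibreProduct π q → ℂ) (v : fibreProduct π (q + 1)) :
    fibreDelta π (-g) v = -fibreDelta π g v := by
  simp [fibreDelta_apply, Finset.sum_neg_distrib]

lemma base_fibreFace {p : ℕ} (i : Fin (p + 1 + 1)) (v : fibreProduct π (p + 1 + 1)) :
    π ((fibreFace π i v).1 0) = π (v.1 0) :=
  v.2 _ _

lemma fibreDelta_finsum_smul {ι : Type*} {p : ℕ} (w : ι → M → ℝ)
    (hw : ∀ x, (Function.support fun i => w i x).Finite) (G : ι → fibreProduct π (p + 1) → ℂ)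
    (v : fibreProduct π (p + 1 + 1)) :
    fibreDelta π (fun u => ∑ᶠ i, w i (π (u.1 0)) • G i u) v =
      ∑ᶠ i, w i (π (v.1 0)) • fibreDelta π (G i) v := by
  simp only [fibreDelta_apply, base_fibreFace, mul_finsum, Finset.smul_sum, mul_smul_comm]
  exact sum_finsum_comm _ _ fun k _ =>
    (hw _).subset (Function.support_smul_subset_left (fun i => w i (π (v.1 0))) _)

def fibreCone (σ : M → Y) (hσ : Function.RightInverse σ π) {p : ℕ}
    (v : fibreProduct π (p + 1)) : fibreProduct π (p + 1 + 1) :=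
  ⟨Fin.cons (σ (π (v.1 0))) v.1, by
    have h : ∀ i, π ((Fin.cons (σ (π (v.1 0))) v.1 : Fin (p + 1 + 1) → Y) i) = π (v.1 0) := by
      refine Fin.cases ?_ fun i => ?_
      · exact hσ _
      · exact v.2 i 0
    exact fun i j => (h i).trans (h j).symm⟩

section Cone

variable {σ : M → Y} (hσ : Function.RightInverse σ π)

lemma fibreFace_zero_fibreCone {p : ℕ} (v : fibreProduct π (p + 1)) :
    fibreFace π 0 (fibreCone π σ hσ v) = v :=
  Subtype.ext <| funext fun j => by simp [fibreFace, fibreCone]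

lemma fibreFace_succ_fibreCone {p : ℕ} (k : Fin (p + 1 + 1)) (v : fibreProduct π (p + 1 + 1)) :
    fibreFace π k.succ (fibreCone π σ hσ v) = fibreCone π σ hσ (fibreFace π k v) := by
  refine Subtype.ext <| funext fun j => Fin.cases ?_ (fun l => ?_) j
  · simp [fibreFace, fibreCone, v.2 (k.succAbove 0) 0]
  · simp [fibreFace, fibreCone, Fin.succ_succAbove_succ]

lemma fibreDelta_comp_fibreCone {p : ℕ} (f : fibreProduct π (p + 1 + 1) → ℂ)
    (v : fibreProduct π (p + 1 + 1)) :
    fibreDelta π (f ∘ fibreCone π σ hσ) v = -f v - fibreDelta π f (fibreCone π σ hσ v) := by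
  rw [fibreDelta_apply, fibreDelta_apply, Fin.sum_univ_succ (n := p + 1 + 1),
    fibreFace_zero_fibreCone]
  simp only [Function.comp_apply, fibreFace_succ_fibreCone, Fin.val_zero, Fin.val_succ, pow_succ]
  simp only [mul_neg, mul_one, neg_mul, Finset.sum_neg_distrib]
  ring

variable [TopologicalSpace Y] [TopologicalSpace M]

lemma continuous_fibreProduct_base (hπ : Continuous π) {p : ℕ} :
    Continuous fun v : fibreProduct π (p + 1) => π (v.1 0) :=
  hπ.comp ((continuous_apply 0).comp continuous_subtype_val)

lemma continuousAt_fibreCone (hπ : Continuous π) {p : ℕ} {v : fibreProduct π (p + 1)}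
    (hσv : ContinuousAt σ (π (v.1 0))) : ContinuousAt (fibreCone π σ hσ) v := by
  rw [Topology.IsInducing.subtypeVal.continuousAt_iff, continuousAt_pi]
  refine Fin.cases ?_ fun j => ?_
  · exact hσv.comp (f := fun u : fibreProduct π (p + 1) => π (u.1 0))
      (continuous_fibreProduct_base π hπ).continuousAt
  · exact ((continuous_apply j).comp continuous_subtype_val).continuousAt

end Cone

section ConeHomotopy

variable {ι : Type*} [TopologicalSpace M] (ρ : PartitionOfUnity ι M univ) (σ : ι → M → Y)
  (hσ : ∀ i, Function.RightInverse (σ i) π)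

noncomputable def coneHomotopy {p : ℕ} (f : fibreProduct π (p + 1 + 1) → ℂ)
    (v : fibreProduct π (p + 1)) : ℂ :=
  ∑ᶠ i, ρ i (π (v.1 0)) • f (fibreCone π (σ i) (hσ i) v)

lemma fibreDelta_coneHomotopy {p : ℕ} (f : fibreProduct π (p + 1 + 1) → ℂ)
    (v : fibreProduct π (p + 1 + 1)) :
    fibreDelta π (coneHomotopy π ρ σ hσ f) v =
      -f v - coneHomotopy π ρ σ hσ (fibreDelta π f) v := by
  have hfin : ∀ x, (Function.support fun i => ρ i x).Finite := ρ.locallyFinite.point_finite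
  have hfin_smul : ∀ F : ι → ℂ, (Function.support fun i => ρ i (π (v.1 0)) • F i).Finite :=
    fun F => (hfin _).subset (Function.support_smul_subset_left (fun i => ρ i (π (v.1 0))) F)
  unfold coneHomotopy
  rw [fibreDelta_finsum_smul π _ hfin]
  simp only [← Function.comp_def f, fibreDelta_comp_fibreCone, smul_sub]
  rw [finsum_sub_distrib (hfin_smul _) (hfin_smul _), ← finsum_smul,
    ρ.sum_eq_one (mem_univ _), one_smul]

lemma continuous_coneHomotopy [TopologicalSpace Y] (hπ : Continuous π)
    (hσc : ∀ i, ∀ x ∈ tsupport (ρ i), ContinuousAt (σ i) x) {p : ℕ}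
    {f : fibreProduct π (p + 1 + 1) → ℂ} (hf : Continuous f) :
    Continuous (coneHomotopy π ρ σ hσ f) := by
  have hb := continuous_fibreProduct_base π hπ (p := p)
  refine continuous_finsum (fun i => continuous_of_tsupport fun v hv => ?_) ?_
  · have hv' : π (v.1 0) ∈ tsupport (ρ i) :=
      tsupport_comp_subset_preimage (ρ i) hb (tsupport_smul_subset_left _ _ hv)
    exact ((ρ i).continuous.comp hb).continuousAt.smul
      (hf.continuousAt.comp (continuousAt_fibreCone π (hσ i) hπ (hσc i _ hv')))
  · exact (ρ.locallyFinite.preimage_continuous hb).subset fun i =>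
      Function.support_smul_subset_left (fun v : fibreProduct π (p + 1) => ρ i (π (v.1 0))) _

end ConeHomotopy

end FibreProduct

/- Local sections are extended to global, possibly discontinuous, right inverses of `π`, so that
cones are defined on every fibre. -/
lemma exists_rightInverse_continuousOn_of_locally_split {Y M : Type*} [TopologicalSpace Y]
    [TopologicalSpace M] (π : Y → M)
    (hsplit : ∀ x : M, ∃ U : Set M, IsOpen U ∧ x ∈ U ∧
      ∃ s : U → Y, Continuous s ∧ ∀ u : U, π (s u) = u) (x : M) :
    ∃ U : Set M, IsOpen U ∧ x ∈ U ∧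
      ∃ σ : M → Y, Function.RightInverse σ π ∧ ContinuousOn σ U := by
  classical
  have hsurj : Function.Surjective π := fun y => by
    obtain ⟨_, _, hy, s, _, hs⟩ := hsplit y
    exact ⟨s ⟨y, hy⟩, hs _⟩
  obtain ⟨U, hU, hxU, s, hs, hπs⟩ := hsplit x
  refine ⟨U, hU, hxU, fun y => if h : y ∈ U then s ⟨y, h⟩ else Function.surjInv hsurj y,
    fun y => ?_, ?_⟩
  · by_cases h : y ∈ U
    · simp [h, hπs]
    · simp [h, Function.surjInv_eq]
  · rw [continuousOn_iff_continuous_domRestrict]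
    convert hs using 1
    funext u
    simp [u.2]

/-- Let `M` be a paracompact normal topological space, `π : Y → M` a
locally split continuous map, and `q ≥ 1`.  If `f : Y^[q+1] → ℂ` is continuous with
`δf = 0` on `Y^[q+2]`, then there is a continuous `g : Y^[q] → ℂ` with `δg = f` on
`Y^[q+1]`: the fundamental complex of continuous `ℂ`-valued functions is exact in all
positive degrees. -/
theorem statement3 {Y M : Type*} [TopologicalSpace Y] [TopologicalSpace M]
    [ParacompactSpace M] [NormalSpace M]
    (π : Y → M) (hπ : Continuous π)
    (hsplit : ∀ x : M, ∃ U : Set M, IsOpen U ∧ x ∈ U ∧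
      ∃ s : U → Y, Continuous s ∧ ∀ u : U, π (s u) = u)
    (q : ℕ) (hq : 1 ≤ q)
    (f : fibreProduct π (q + 1) → ℂ) (hf : Continuous f)
    (hδf : ∀ v : fibreProduct π (q + 1 + 1), fibreDelta π f v = 0) :
    ∃ g : fibreProduct π q → ℂ, Continuous g ∧
      ∀ v : fibreProduct π (q + 1), fibreDelta π g v = f v := by
  obtain ⟨p, rfl⟩ := Nat.exists_eq_add_of_le' hq
  choose U hUo hxU σ hσ hσc using exists_rightInverse_continuousOn_of_locally_split π hsplit
  obtain ⟨ρ, hρ⟩ := PartitionOfUnity.exists_isSubordinate isClosed_univ U hUo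
    fun x _ => mem_iUnion.2 ⟨x, hxU x⟩
  have hσρ : ∀ i, ∀ x ∈ tsupport (ρ i), ContinuousAt (σ i) x := fun i x hx =>
    (hσc i).continuousAt ((hUo i).mem_nhds (hρ i hx))
  refine ⟨-coneHomotopy π ρ σ hσ f, (continuous_coneHomotopy π ρ σ hσ hπ hσρ hf).neg,
    fun v => ?_⟩
  rw [fibreDelta_neg, fibreDelta_coneHomotopy]
  simp only [coneHomotopy, hδf, smul_zero, finsum_zero, sub_zero, neg_neg]
end

section
/- Let M be a Hausdorff, σ-compact, finite-dimensional smooth manifold, Y a smooth manifold, and π : Y → M a smooth map that is smoothly locally split. Let f : Y × Y → ℂ be a smooth function which satisfies the additive cocycle identity f(y₁, y₂) + f(y₂, y₃) = f(y₁, y₃) whenever π(y₁) = π(y₂) = π(y₃). Then there exists a smooth function h : Y → ℂ such that f(y₁, y₂) = h(y₂) − h(y₁) whenever π(y₁) = π(y₂). (Exactness at the stage Y^[2] of the fundamental complex of 0-forms in the smooth category, proved using smooth partitions of unity on M.) -/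
open Manifold Function Set
open scoped ContDiff

/-!
Over an open set `U ⊆ M` carrying a smooth section `s` of `π`, the function
`y ↦ f (s (π y), y)` is a local primitive of `f`: by the cocycle identity through the base
point `s (π y₁)` it satisfies `g y₂ - g y₁ = f (y₁, y₂)` whenever `π y₁ = π y₂ ∈ U`. Gluing the
local primitives with a smooth partition of unity on `M`, pulled back to `Y` along `π`, gives a
global primitive, since the weights `ρ i (π y)` only depend on the fibre and sum to one.
-/

theorem finsum_smul_sub_finsum_smul_of_sub_eq {ι R F : Type*} [Ring R] [AddCommGroup F]
    [Module R F] {w : ι → R} (hw : HasFiniteSupport w) (hsum : ∑ᶠ i, w i = 1)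
    {a b : ι → F} {c : F} (hab : ∀ i, w i ≠ 0 → a i - b i = c) :
    ∑ᶠ i, w i • a i - ∑ᶠ i, w i • b i = c := by
  have hfin : ∀ v : ι → F, HasFiniteSupport fun i ↦ w i • v i := fun v ↦
    hw.subset fun i hi ↦ left_ne_zero_of_smul hi
  calc ∑ᶠ i, w i • a i - ∑ᶠ i, w i • b i = ∑ᶠ i, w i • (a i - b i) := by
        simp only [smul_sub]; exact (finsum_sub_distrib (hfin a) (hfin b)).symm
    _ = ∑ᶠ i, w i • c := finsum_congr fun i ↦ by
        rcases eq_or_ne (w i) 0 with h | h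
        · simp [h]
        · rw [hab i h]
    _ = c := by rw [← finsum_smul' hw, hsum, one_smul]

namespace SmoothPartitionOfUnity

variable {ι : Type*}
  {E : Type*} [NormedAddCommGroup E] [NormedSpace ℝ E]
  {H : Type*} [TopologicalSpace H] {I : ModelWithCorners ℝ E H}
  {M : Type*} [TopologicalSpace M] [ChartedSpace H M]
  {E' : Type*} [NormedAddCommGroup E'] [NormedSpace ℝ E']
  {H' : Type*} [TopologicalSpace H'] {I' : ModelWithCorners ℝ E' H'}
  {N : Type*} [TopologicalSpace N] [ChartedSpace H' N]
  {s : Set M} {π : N → M}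

noncomputable def comp (ρ : SmoothPartitionOfUnity ι I M s) (hπ : ContMDiff I' I ∞ π) :
    SmoothPartitionOfUnity ι I' N (π ⁻¹' s) where
  toFun i := ⟨ρ i ∘ π, (ρ i).contMDiff.comp hπ⟩
  locallyFinite' := ρ.locallyFinite.preimage_continuous hπ.continuous
  nonneg' i y := ρ.nonneg i (π y)
  sum_eq_one' _ hy := ρ.sum_eq_one hy
  sum_le_one' y := ρ.sum_le_one (π y)

@[simp]
theorem comp_apply (ρ : SmoothPartitionOfUnity ι I M s) (hπ : ContMDiff I' I ∞ π) (i : ι)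
    (y : N) : ρ.comp hπ i y = ρ i (π y) :=
  rfl

theorem IsSubordinate.comp {ρ : SmoothPartitionOfUnity ι I M s} {U : ι → Set M}
    (hρ : ρ.IsSubordinate U) (hπ : ContMDiff I' I ∞ π) :
    (ρ.comp hπ).IsSubordinate fun i ↦ π ⁻¹' U i := fun i ↦
  (tsupport_comp_subset_preimage (ρ i) hπ.continuous).trans (preimage_mono (hρ i))

end SmoothPartitionOfUnity

theorem statement4_general
    {EM : Type*} [NormedAddCommGroup EM] [NormedSpace ℝ EM] [FiniteDimensional ℝ EM]
    {HM : Type*} [TopologicalSpace HM] {IM : ModelWithCorners ℝ EM HM}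
    {M : Type*} [TopologicalSpace M] [ChartedSpace HM M] [IsManifold IM (⊤ : ℕ∞) M]
    [T2Space M] [SigmaCompactSpace M]
    {EY : Type*} [NormedAddCommGroup EY] [NormedSpace ℝ EY]
    {HY : Type*} [TopologicalSpace HY] {IY : ModelWithCorners ℝ EY HY}
    {Y : Type*} [TopologicalSpace Y] [ChartedSpace HY Y]
    (π : Y → M) (hπ : ContMDiff IY IM (⊤ : ℕ∞) π)
    (hsplit : ∀ x : M, ∃ U : Set M, IsOpen U ∧ x ∈ U ∧
      ∃ s : M → Y, ContMDiffOn IM IY (⊤ : ℕ∞) s U ∧ ∀ u ∈ U, π (s u) = u)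
    (f : Y × Y → ℂ) (hf : ContMDiff (IY.prod IY) 𝓘(ℝ, ℂ) (⊤ : ℕ∞) f)
    (hcoc : ∀ y₁ y₂ y₃ : Y, π y₁ = π y₂ → π y₂ = π y₃ →
      f (y₁, y₂) + f (y₂, y₃) = f (y₁, y₃)) :
    ∃ h : Y → ℂ, ContMDiff IY 𝓘(ℝ, ℂ) (⊤ : ℕ∞) h ∧
      ∀ y₁ y₂ : Y, π y₁ = π y₂ → f (y₁, y₂) = h y₂ - h y₁ := by
  choose U hU_open hU_mem sec hsec_smooth hsec using hsplit
  obtain ⟨ρ, hρ⟩ := SmoothPartitionOfUnity.exists_isSubordinate IM isClosed_univ U hU_open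
    fun x _ ↦ mem_iUnion.2 ⟨x, hU_mem x⟩
  let g : M → Y → ℂ := fun i y ↦ f (sec i (π y), y)
  have hg_smooth : ∀ i, ContMDiffOn IY 𝓘(ℝ, ℂ) ∞ (g i) (π ⁻¹' U i) := fun i ↦
    hf.comp_contMDiffOn (((hsec_smooth i).comp hπ.contMDiffOn (mapsTo_preimage π (U i))).prodMk
      contMDiffOn_id)
  have hg_primitive : ∀ i y₁ y₂, π y₁ = π y₂ → π y₁ ∈ U i → g i y₂ - g i y₁ = f (y₁, y₂) := by
    intro i y₁ y₂ hy hyU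
    simp only [g, ← hy, ← hcoc _ y₁ y₂ (hsec i _ hyU) hy]
    ring
  refine ⟨fun y ↦ ∑ᶠ i, ρ.comp hπ i y • g i y,
    (hρ.comp hπ).contMDiff_finsum_smul (fun i ↦ (hU_open i).preimage hπ.continuous) hg_smooth,
    fun y₁ y₂ hy ↦ ?_⟩
  simp only [SmoothPartitionOfUnity.comp_apply, ← hy]
  refine (finsum_smul_sub_finsum_smul_of_sub_eq (ρ.locallyFinite.point_finite (π y₁))
    (ρ.sum_eq_one (mem_univ _)) fun i hi ↦ hg_primitive i y₁ y₂ hy ?_).symm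
  exact hρ i (subset_closure hi)

/-- Let `M` be a Hausdorff, σ-compact, finite-dimensional smooth
manifold, `Y` a smooth manifold, and `π : Y → M` a smooth map that is smoothly locally
split.  Let `f : Y × Y → ℂ` be a smooth function satisfying the additive cocycle
identity `f(y₁,y₂) + f(y₂,y₃) = f(y₁,y₃)` whenever `π y₁ = π y₂ = π y₃`.  Then there is
a smooth `h : Y → ℂ` with `f(y₁,y₂) = h y₂ - h y₁` whenever `π y₁ = π y₂`. -/
theorem statement4
    {EM : Type*} [NormedAddCommGroup EM] [NormedSpace ℝ EM] [FiniteDimensional ℝ EM]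
    {HM : Type*} [TopologicalSpace HM] {IM : ModelWithCorners ℝ EM HM}
    {M : Type*} [TopologicalSpace M] [ChartedSpace HM M] [IsManifold IM (⊤ : ℕ∞) M]
    [T2Space M] [SigmaCompactSpace M]
    {EY : Type*} [NormedAddCommGroup EY] [NormedSpace ℝ EY]
    {HY : Type*} [TopologicalSpace HY] {IY : ModelWithCorners ℝ EY HY}
    {Y : Type*} [TopologicalSpace Y] [ChartedSpace HY Y] [IsManifold IY (⊤ : ℕ∞) Y]
    (π : Y → M) (hπ : ContMDiff IY IM (⊤ : ℕ∞) π)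
    (hsplit : ∀ x : M, ∃ U : Set M, IsOpen U ∧ x ∈ U ∧
      ∃ s : M → Y, ContMDiffOn IM IY (⊤ : ℕ∞) s U ∧ ∀ u ∈ U, π (s u) = u)
    (f : Y × Y → ℂ) (hf : ContMDiff (IY.prod IY) 𝓘(ℝ, ℂ) (⊤ : ℕ∞) f)
    (hcoc : ∀ y₁ y₂ y₃ : Y, π y₁ = π y₂ → π y₂ = π y₃ →
      f (y₁, y₂) + f (y₂, y₃) = f (y₁, y₃)) :
    ∃ h : Y → ℂ, ContMDiff IY 𝓘(ℝ, ℂ) (⊤ : ℕ∞) h ∧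
      ∀ y₁ y₂ : Y, π y₁ = π y₂ → f (y₁, y₂) = h y₂ - h y₁ :=
  statement4_general π hπ hsplit f hf hcoc
end

section
/- Let M be a Hausdorff, σ-compact, finite-dimensional smooth manifold, Y a smooth manifold, π : Y → M a smooth map that is smoothly locally split, and q ≥ 1 an integer. Let f : Y^{q+1} → ℂ be a smooth function on the (q+1)-fold cartesian product whose restriction to the fibre product Y^[q+1] satisfies δf = 0 on Y^[q+2]. Then there exists a smooth function g : Y^{q} → ℂ on the q-fold cartesian product such that δg = f holds on Y^[q+1]. (Exactness in all positive degrees of the fundamental complex of smooth ℂ-valued functions on the fibre powers of Y.) -/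
/-!
Choose smooth local sections `s α` of `π` over an open cover `U` of `M` and a smooth partition of
unity `ρ` on `M` subordinate to it. Inserting a point `y` in front, `(h_y f) v = f (y, v)`, is a
contracting homotopy: `δ (h_y f) w + (δ f) (y, w) = -f w` whenever `(y, w)` lies in a fibre product.
Hence `g v = -∑ α, ρ α (π v₀) • f (s α (π v₀), v)` is smooth, and for a cocycle `f` it satisfies
`δ g = ∑ α, ρ α • f = f` on the fibre product.
-/

open Manifold Topology

section PiManifold

variable {𝕜 : Type*} [NontriviallyNormedField 𝕜] {ι : Type*} [Fintype ι]
  {E : Type*} [NormedAddCommGroup E] [NormedSpace 𝕜 E]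
  {H : Type*} [TopologicalSpace H] {I : ModelWithCorners 𝕜 E H}
  {Y : Type*} [TopologicalSpace Y] [ChartedSpace H Y]
  {E' : Type*} [NormedAddCommGroup E'] [NormedSpace 𝕜 E']
  {H' : Type*} [TopologicalSpace H'] {J : ModelWithCorners 𝕜 E' H'}
  {N : Type*} [TopologicalSpace N] [ChartedSpace H' N] {n : WithTop ℕ∞}

theorem contMDiff_pi_apply (i : ι) :
    ContMDiff (ModelWithCorners.pi fun _ : ι => I) I n (fun v : ι → Y => v i) := by
  intro x
  refine contMDiffAt_iff.2 ⟨(continuous_apply i).continuousAt, ?_⟩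
  refine (ContinuousLinearMap.proj i : (ι → E) →L[𝕜] E).contDiff.contDiffWithinAt
    |>.congr_of_eventuallyEq_of_mem ?_ (Set.mem_range_self _)
  filter_upwards [extChartAt_target_mem_nhdsWithin x] with w hw
  rw [extChartAt_target] at hw
  obtain ⟨hw, v, rfl⟩ := hw
  refine (extChartAt I (x i)).right_inv ?_
  rw [extChartAt_target]
  exact ⟨hw i (Set.mem_univ i), v i, rfl⟩

theorem contMDiffAt_pi_of_apply {φ : N → ι → Y} {x : N}
    (h : ∀ i, ContMDiffAt J I n (fun y => φ y i) x) :
    ContMDiffAt J (ModelWithCorners.pi fun _ : ι => I) n φ x := by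
  refine contMDiffAt_iff.2 ⟨continuousAt_pi.2 fun i => (h i).continuousAt, ?_⟩
  exact contDiffWithinAt_pi.2 fun i => (contMDiffAt_iff.1 (h i)).2

theorem ContMDiffAt.fin_cons {q : ℕ} {a : N → Y} {b : N → Fin q → Y} {x : N}
    (ha : ContMDiffAt J I n a x)
    (hb : ContMDiffAt J (ModelWithCorners.pi fun _ : Fin q => I) n b x) :
    ContMDiffAt J (ModelWithCorners.pi fun _ : Fin (q + 1) => I) n
      (fun y => (Fin.cons (a y) (b y) : Fin (q + 1) → Y)) x :=
  contMDiffAt_pi_of_apply <| Fin.cases ha fun j => (contMDiff_pi_apply j).contMDiffAt.comp x hb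

end PiManifold

theorem SmoothPartitionOfUnity.contMDiff_finsum_smul_comp
    {ι : Type*} {E : Type*} [NormedAddCommGroup E] [NormedSpace ℝ E]
    {H : Type*} [TopologicalSpace H] {I : ModelWithCorners ℝ E H}
    {M : Type*} [TopologicalSpace M] [ChartedSpace H M] {s : Set M}
    {E' : Type*} [NormedAddCommGroup E'] [NormedSpace ℝ E']
    {H' : Type*} [TopologicalSpace H'] {J : ModelWithCorners ℝ E' H'}
    {N : Type*} [TopologicalSpace N] [ChartedSpace H' N]
    {F : Type*} [NormedAddCommGroup F] [NormedSpace ℝ F] {n : ℕ∞}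
    (ρ : SmoothPartitionOfUnity ι I M s) {e : N → M} (he : ContMDiff J I n e)
    {g : ι → N → F} (hg : ∀ i y, e y ∈ tsupport (ρ i) → ContMDiffAt J 𝓘(ℝ, F) n (g i) y) :
    ContMDiff J 𝓘(ℝ, F) n fun y => ∑ᶠ i, ρ i (e y) • g i y := by
  refine contMDiff_finsum (fun i => contMDiff_of_tsupport fun y hy => ?_) ?_
  · have hy' : e y ∈ tsupport (ρ i) :=
      tsupport_comp_subset_preimage (ρ i) he.continuous (tsupport_smul_subset_left _ _ hy)
    exact (((ρ i).contMDiff.of_le (mod_cast le_top)).comp he).contMDiffAt.smul (hg i y hy')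
  · exact (ρ.locallyFinite.preimage_continuous he.continuous).subset
      fun i => Function.support_smul_subset_left (fun y => ρ i (e y)) (g i)

/-- `δ f`, with the entries of `v` indexed from `0`, whence the sign `(-1) ^ (i + 1)`. -/
def coboundary {Y R : Type*} [Ring R] {p : ℕ} (f : (Fin p → Y) → R) (v : Fin (p + 1) → Y) : R :=
  ∑ i : Fin (p + 1), (-1) ^ ((i : ℕ) + 1) * f (i.removeNth v)

theorem coboundary_neg_cons {Y R : Type*} [Ring R] {p : ℕ} (f : (Fin (p + 1) → Y) → R) (y : Y)
    (w : Fin (p + 1) → Y) :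
    coboundary (fun v => -f (Fin.cons y v)) w = f w + coboundary f (Fin.cons y w) := by
  have hface (i : Fin (p + 1)) : i.succ.removeNth (Fin.cons y w : Fin (p + 2) → Y) =
      (Fin.cons y (i.removeNth w) : Fin (p + 1) → Y) :=
    Fin.cons_comp_succ_succAbove y w i
  simp only [coboundary, Fin.sum_univ_succ (n := p + 1), Fin.removeNth_zero, Fin.tail_cons, hface,
    Fin.val_zero, Fin.val_succ, pow_succ]
  simp

theorem coboundary_sum_smul {Y R S κ : Type*} [Ring R] [Semiring S] [Module S R]
    [SMulCommClass S R R] {p : ℕ} (t : Finset κ) (c : κ → S) (G : κ → (Fin p → Y) → R)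
    (w : Fin (p + 1) → Y) :
    coboundary (fun v => ∑ k ∈ t, c k • G k v) w = ∑ k ∈ t, c k • coboundary (G k) w := by
  simp only [coboundary, Finset.mul_sum, mul_smul_comm, Finset.smul_sum]
  exact Finset.sum_comm

theorem statement5_general
    {EM : Type*} [NormedAddCommGroup EM] [NormedSpace ℝ EM] [FiniteDimensional ℝ EM]
    {HM : Type*} [TopologicalSpace HM] {IM : ModelWithCorners ℝ EM HM}
    {M : Type*} [TopologicalSpace M] [ChartedSpace HM M] [IsManifold IM ((⊤ : ℕ∞) : WithTop ℕ∞) M]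
    [T2Space M] [SigmaCompactSpace M]
    {EY : Type*} [NormedAddCommGroup EY] [NormedSpace ℝ EY]
    {HY : Type*} [TopologicalSpace HY] {IY : ModelWithCorners ℝ EY HY}
    {Y : Type*} [TopologicalSpace Y] [ChartedSpace HY Y]
    (π : Y → M) (hπ : ContMDiff IY IM (⊤ : ℕ∞) π)
    (hsplit : ∀ x : M, ∃ U : Set M, IsOpen U ∧ x ∈ U ∧
      ∃ s : M → Y, ContMDiffOn IM IY (⊤ : ℕ∞) s U ∧ ∀ u ∈ U, π (s u) = u)
    (q : ℕ) (hq : 1 ≤ q)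
    (f : (Fin (q + 1) → Y) → ℂ)
    (hf : ContMDiff (ModelWithCorners.pi fun _ : Fin (q + 1) => IY) 𝓘(ℝ, ℂ) (⊤ : ℕ∞) f)
    (hδf : ∀ v : Fin (q + 2) → Y, (∀ i j, π (v i) = π (v j)) →
      ∑ i : Fin (q + 2), (-1 : ℂ) ^ ((i : ℕ) + 1) * f (fun j => v (i.succAbove j)) = 0) :
    ∃ g : (Fin q → Y) → ℂ,
      ContMDiff (ModelWithCorners.pi fun _ : Fin q => IY) 𝓘(ℝ, ℂ) (⊤ : ℕ∞) g ∧
      ∀ v : Fin (q + 1) → Y, (∀ i j, π (v i) = π (v j)) →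
        ∑ i : Fin (q + 1), (-1 : ℂ) ^ ((i : ℕ) + 1) * g (fun j => v (i.succAbove j))
          = f v := by
  replace hδf : ∀ v, (∀ i j, π (v i) = π (v j)) → coboundary f v = 0 := hδf
  choose U hU hxU s hs hπs using hsplit
  obtain ⟨ρ, hρU⟩ := SmoothPartitionOfUnity.exists_isSubordinate IM isClosed_univ U hU
    fun x _ => Set.mem_iUnion.2 ⟨x, hxU x⟩
  let e : (Fin q → Y) → M := fun v => π (v ⟨0, hq⟩)
  have he : ContMDiff (ModelWithCorners.pi fun _ : Fin q => IY) IM (⊤ : ℕ∞) e :=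
    hπ.comp (contMDiff_pi_apply _)
  refine ⟨fun v => ∑ᶠ α, ρ α (e v) • -f (Fin.cons (s α (e v)) v),
    ρ.contMDiff_finsum_smul_comp he fun α v hv => ?_, fun w hw => ?_⟩
  · have hsα := (hs α).contMDiffAt ((hU α).mem_nhds (hρU α hv))
    exact (hf.contMDiffAt.comp v ((hsα.comp v he.contMDiffAt).fin_cons contMDiffAt_id)).neg
  · set x₀ := π (w 0)
    have hface (i : Fin (q + 1)) : e (i.removeNth w) = x₀ := hw _ _
    change coboundary (fun v => ∑ᶠ α, ρ α (e v) • -f (Fin.cons (s α (e v)) v)) w = f w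
    calc coboundary _ w
        = coboundary (fun v => ∑ α ∈ ρ.finsupport x₀, ρ α x₀ • -f (Fin.cons (s α x₀) v)) w := by
          refine Finset.sum_congr rfl fun i _ => ?_
          dsimp only
          rw [hface i, ρ.sum_finsupport_smul_eq_finsum x₀ fun α x => -f (Fin.cons (s α x) _)]
      _ = ∑ α ∈ ρ.finsupport x₀, ρ α x₀ • f w := by
          rw [coboundary_sum_smul]
          refine Finset.sum_congr rfl fun α hα => ?_
          have hx₀ : x₀ ∈ U α := hρU α (subset_closure ((ρ.mem_finsupport x₀).1 hα))
          have hbase : ∀ i, π ((Fin.cons (s α x₀) w : Fin (q + 2) → Y) i) = x₀ :=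
            Fin.cases (hπs α x₀ hx₀) fun k => hw k 0
          have hfib := fun i j => (hbase i).trans (hbase j).symm
          rw [coboundary_neg_cons, hδf _ hfib, add_zero]
      _ = f w := by rw [← Finset.sum_smul, ρ.sum_finsupport x₀ (Set.mem_univ x₀), one_smul]

/-- Let `M` be a Hausdorff, σ-compact, finite-dimensional smooth
manifold, `Y` a smooth manifold, `π : Y → M` a smooth map that is smoothly locally
split, and `q ≥ 1`.  Let `f` be a smooth `ℂ`-valued function on the `(q+1)`-fold
cartesian product `Y^{q+1}` (with its product smooth structure) whose restriction to the
fibre product `Y^[q+1] = {v : ∀ i j, π (v i) = π (v j)}` satisfies `δf = 0` on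
`Y^[q+2]`, where `δg (y₁, …, y_{p+1}) = ∑ᵢ (−1)^i g(y₁, …, ŷ_i, …, y_{p+1})` (entries
indexed from `1`; below `i : Fin (p+1)` is `0`-indexed, whence the sign `(−1)^(i+1)`).
Then there is a smooth function `g` on the `q`-fold cartesian product `Y^q` with
`δg = f` on `Y^[q+1]`. -/
theorem statement5
    {EM : Type*} [NormedAddCommGroup EM] [NormedSpace ℝ EM] [FiniteDimensional ℝ EM]
    {HM : Type*} [TopologicalSpace HM] {IM : ModelWithCorners ℝ EM HM}
    {M : Type*} [TopologicalSpace M] [ChartedSpace HM M] [IsManifold IM ((⊤ : ℕ∞) : WithTop ℕ∞) M]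
    [T2Space M] [SigmaCompactSpace M]
    {EY : Type*} [NormedAddCommGroup EY] [NormedSpace ℝ EY]
    {HY : Type*} [TopologicalSpace HY] {IY : ModelWithCorners ℝ EY HY}
    {Y : Type*} [TopologicalSpace Y] [ChartedSpace HY Y] [IsManifold IY ((⊤ : ℕ∞) : WithTop ℕ∞) Y]
    (π : Y → M) (hπ : ContMDiff IY IM (⊤ : ℕ∞) π)
    (hsplit : ∀ x : M, ∃ U : Set M, IsOpen U ∧ x ∈ U ∧
      ∃ s : M → Y, ContMDiffOn IM IY (⊤ : ℕ∞) s U ∧ ∀ u ∈ U, π (s u) = u)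
    (q : ℕ) (hq : 1 ≤ q)
    (f : (Fin (q + 1) → Y) → ℂ)
    (hf : ContMDiff (ModelWithCorners.pi fun _ : Fin (q + 1) => IY) 𝓘(ℝ, ℂ) (⊤ : ℕ∞) f)
    (hδf : ∀ v : Fin (q + 2) → Y, (∀ i j, π (v i) = π (v j)) →
      ∑ i : Fin (q + 2), (-1 : ℂ) ^ ((i : ℕ) + 1) * f (fun j => v (i.succAbove j)) = 0) :
    ∃ g : (Fin q → Y) → ℂ,
      ContMDiff (ModelWithCorners.pi fun _ : Fin q => IY) 𝓘(ℝ, ℂ) (⊤ : ℕ∞) g ∧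
      ∀ v : Fin (q + 1) → Y, (∀ i j, π (v i) = π (v j)) →
        ∑ i : Fin (q + 1), (-1 : ℂ) ^ ((i : ℕ) + 1) * g (fun j => v (i.succAbove j))
          = f v :=
  statement5_general π hπ hsplit q hq f hf hδf
end
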